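/- Let δ > 0, I := [a, a+δ], u₀ ∈ E, β > 0, and let f : I × B̄(u₀,β) → E be continuous and satisfy ‖f(t,x) - f(t,y)‖_E ≤ κ·‖x-y‖_E for all t ∈ I and x, y ∈ B̄(u₀,β), where κ > 0 and B̄(u₀,β) is the closed ball in E of centre u₀ and radius β. For a continuous u : I → E with values in B̄(u₀,β) define (𝔉u)(t) := u₀ + (1/Γ(α)) ∫_a^t (t-s)^{α-1} f(s,u(s)) ds. Then for all such u, v: sup_{t∈I} ‖(𝔉u)(t) - (𝔉v)(t)‖_E ≤ (κ·δ^α/Γ(α+1))·sup_{t∈I} ‖u(t) - v(t)‖_E. -/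

import Mathlib

open MeasureTheory Set intervalIntegral

/-!
The Volterra operator is `u₀` plus the Riemann–Liouville integral `I^α` of `s ↦ f s (u s)`,
so `𝔉u - 𝔉v = I^α (f(·, u) - f(·, v))` by linearity. The Lipschitz condition bounds the integrand
by `κ M` with `M = sup ‖u - v‖`, and `I^α` of a function bounded by `C` on `(a, t]` has norm at
most `C (t - a)^α / Γ(α + 1)`, because `∫_a^t (t - s)^{α-1} ds = (t - a)^α / α` and
`α Γ(α) = Γ(α + 1)`.
-/

noncomputable def riemannLiouvilleIntegral {E : Type*} [NormedAddCommGroup E] [NormedSpace ℝ E]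
    (α a : ℝ) (g : ℝ → E) (t : ℝ) : E :=
  (Real.Gamma α)⁻¹ • ∫ s in a..t, (t - s) ^ (α - 1) • g s

lemma intervalIntegrable_sub_rpow {r : ℝ} (hr : -1 < r) (t a b : ℝ) :
    IntervalIntegrable (fun s : ℝ => (t - s) ^ r) volume a b := by
  simpa using (intervalIntegrable_rpow' hr (a := t - a) (b := t - b)).comp_sub_left t

lemma integral_sub_rpow_sub_one {α : ℝ} (hα : 0 < α) (a t : ℝ) :
    ∫ s in a..t, (t - s) ^ (α - 1) = (t - a) ^ α / α := by
  rw [intervalIntegral.integral_comp_sub_left (fun x => x ^ (α - 1)) t, sub_self,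
    integral_rpow (Or.inl (by linarith)), sub_add_cancel, Real.zero_rpow hα.ne', sub_zero]

section RiemannLiouville

variable {E : Type*} [NormedAddCommGroup E] [NormedSpace ℝ E] {α a t : ℝ}

lemma ContinuousOn.intervalIntegrable_sub_rpow_smul (hα : 0 < α) {g : ℝ → E}
    (hg : ContinuousOn g (Icc a t)) (hat : a ≤ t) :
    IntervalIntegrable (fun s => (t - s) ^ (α - 1) • g s) volume a t :=
  (intervalIntegrable_sub_rpow (by linarith) t a t).smul_continuousOn (by rwa [uIcc_of_le hat])

lemma riemannLiouvilleIntegral_sub (hα : 0 < α) (hat : a ≤ t) {g₁ g₂ : ℝ → E}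
    (hg₁ : ContinuousOn g₁ (Icc a t)) (hg₂ : ContinuousOn g₂ (Icc a t)) :
    riemannLiouvilleIntegral α a (g₁ - g₂) t =
      riemannLiouvilleIntegral α a g₁ t - riemannLiouvilleIntegral α a g₂ t := by
  simp only [riemannLiouvilleIntegral, Pi.sub_apply, smul_sub,
    integral_sub (hg₁.intervalIntegrable_sub_rpow_smul hα hat)
      (hg₂.intervalIntegrable_sub_rpow_smul hα hat)]

lemma norm_riemannLiouvilleIntegral_le (hα : 0 < α) (hat : a ≤ t) {g : ℝ → E} {C : ℝ}
    (hC : ∀ s ∈ Ioc a t, ‖g s‖ ≤ C) :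
    ‖riemannLiouvilleIntegral α a g t‖ ≤ C * (t - a) ^ α / Real.Gamma (α + 1) := by
  have hΓ : 0 < Real.Gamma α := Real.Gamma_pos_of_pos hα
  have hintegral : ‖∫ s in a..t, (t - s) ^ (α - 1) • g s‖ ≤ C * ((t - a) ^ α / α) := by
    rw [← integral_sub_rpow_sub_one hα, ← intervalIntegral.integral_const_mul]
    refine norm_integral_le_of_norm_le hat (ae_of_all _ fun s hs => ?_)
      ((intervalIntegrable_sub_rpow (by linarith) t a t).const_mul C)
    have hkernel : 0 ≤ (t - s) ^ (α - 1) := Real.rpow_nonneg (by linarith [hs.2]) _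
    rw [norm_smul, Real.norm_of_nonneg hkernel, mul_comm C]
    exact mul_le_mul_of_nonneg_left (hC s hs) hkernel
  rw [riemannLiouvilleIntegral, norm_smul, Real.norm_of_nonneg (inv_nonneg.2 hΓ.le),
    Real.Gamma_add_one hα.ne']
  calc (Real.Gamma α)⁻¹ * ‖∫ s in a..t, (t - s) ^ (α - 1) • g s‖
      ≤ (Real.Gamma α)⁻¹ * (C * ((t - a) ^ α / α)) := by gcongr
    _ = C * (t - a) ^ α / (α * Real.Gamma α) := by field_simp

end RiemannLiouville

theorem volterra_operator_contraction_estimate_general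
    {E : Type*} [NormedAddCommGroup E] [NormedSpace ℝ E]
    (a α δ β κ : ℝ) (hδ : 0 < δ) (hα0 : 0 < α) (hκ : 0 < κ)
    (u₀ : E) (f : ℝ → E → E)
    (hfc : ContinuousOn (fun p : ℝ × E => f p.1 p.2)
      (Set.Icc a (a + δ) ×ˢ Metric.closedBall u₀ β))
    (hlip : ∀ t ∈ Set.Icc a (a + δ), ∀ x ∈ Metric.closedBall u₀ β,
      ∀ y ∈ Metric.closedBall u₀ β, ‖f t x - f t y‖ ≤ κ * ‖x - y‖)
    (u v : ℝ → E)
    (hu : ContinuousOn u (Set.Icc a (a + δ)))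
    (huB : ∀ t ∈ Set.Icc a (a + δ), u t ∈ Metric.closedBall u₀ β)
    (hv : ContinuousOn v (Set.Icc a (a + δ)))
    (hvB : ∀ t ∈ Set.Icc a (a + δ), v t ∈ Metric.closedBall u₀ β)
    (Fu Fv : ℝ → E)
    (hFu : ∀ t, Fu t = u₀ + (Real.Gamma α)⁻¹ • ∫ s in a..t, ((t - s) ^ (α - 1) : ℝ) • f s (u s))
    (hFv : ∀ t, Fv t = u₀ + (Real.Gamma α)⁻¹ • ∫ s in a..t, ((t - s) ^ (α - 1) : ℝ) • f s (v s)) :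
    sSup ((fun t => ‖Fu t - Fv t‖) '' Set.Icc a (a + δ))
      ≤ κ * δ ^ α / Real.Gamma (α + 1) *
        sSup ((fun t => ‖u t - v t‖) '' Set.Icc a (a + δ)) := by
  set M := sSup ((fun t => ‖u t - v t‖) '' Icc a (a + δ))
  have hM : ∀ t ∈ Icc a (a + δ), ‖u t - v t‖ ≤ M := fun t ht =>
    le_csSup (isCompact_Icc.image_of_continuousOn (hu.sub hv).norm).bddAbove ⟨t, ht, rfl⟩
  have hfu : ContinuousOn (fun s => f s (u s)) (Icc a (a + δ)) :=
    hfc.comp (continuousOn_id.prodMk hu) fun s hs => ⟨hs, huB s hs⟩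
  have hfv : ContinuousOn (fun s => f s (v s)) (Icc a (a + δ)) :=
    hfc.comp (continuousOn_id.prodMk hv) fun s hs => ⟨hs, hvB s hs⟩
  refine csSup_le ((nonempty_Icc.2 (by linarith)).image _) ?_
  rintro _ ⟨t, ht, rfl⟩
  have hsub : Icc a t ⊆ Icc a (a + δ) := Icc_subset_Icc_right ht.2
  have hdiff : Fu t - Fv t = riemannLiouvilleIntegral α a
      ((fun s => f s (u s)) - fun s => f s (v s)) t := by
    rw [riemannLiouvilleIntegral_sub hα0 ht.1 (hfu.mono hsub) (hfv.mono hsub), hFu, hFv,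
      add_sub_add_left_eq_sub]
    rfl
  have hbound : ∀ s ∈ Ioc a t, ‖f s (u s) - f s (v s)‖ ≤ κ * M := fun s hs =>
    have hs' : s ∈ Icc a (a + δ) := hsub (Ioc_subset_Icc_self hs)
    (hlip s hs' _ (huB s hs') _ (hvB s hs')).trans (by gcongr; exact hM s hs')
  calc ‖Fu t - Fv t‖ ≤ κ * M * (t - a) ^ α / Real.Gamma (α + 1) :=
        hdiff ▸ norm_riemannLiouvilleIntegral_le hα0 ht.1 hbound
    _ ≤ κ * M * δ ^ α / Real.Gamma (α + 1) := by
        have hM0 : 0 ≤ M := (norm_nonneg _).trans (hM a (left_mem_Icc.2 (by linarith)))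
        gcongr
        · linarith [ht.1]
        · linarith [ht.2]
    _ = κ * δ ^ α / Real.Gamma (α + 1) * M := by ring

/-- Let `I = [a, a+δ]`, `f : I × B̄(u₀,β) → E` continuous and Lipschitz in the
second variable with constant `κ`, and let `𝔉` be the Volterra operator
`(𝔉u)(t) = u₀ + (1/Γ(α)) ∫_a^t (t-s)^{α-1} f(s,u(s)) ds`. Then for all continuous
`u, v : I → E` with values in `B̄(u₀,β)`,
`sup_{t∈I} ‖(𝔉u)(t) - (𝔉v)(t)‖ ≤ (κ δ^α/Γ(α+1)) · sup_{t∈I} ‖u(t) - v(t)‖`. -/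
theorem volterra_operator_contraction_estimate
    {E : Type*} [NormedAddCommGroup E] [NormedSpace ℝ E] [CompleteSpace E]
    (a α δ β κ : ℝ) (hδ : 0 < δ) (hα0 : 0 < α) (hα1 : α < 1) (hβ : 0 < β) (hκ : 0 < κ)
    (u₀ : E) (f : ℝ → E → E)
    (hfc : ContinuousOn (fun p : ℝ × E => f p.1 p.2)
      (Set.Icc a (a + δ) ×ˢ Metric.closedBall u₀ β))
    (hlip : ∀ t ∈ Set.Icc a (a + δ), ∀ x ∈ Metric.closedBall u₀ β,
      ∀ y ∈ Metric.closedBall u₀ β, ‖f t x - f t y‖ ≤ κ * ‖x - y‖)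
    (u v : ℝ → E)
    (hu : ContinuousOn u (Set.Icc a (a + δ)))
    (huB : ∀ t ∈ Set.Icc a (a + δ), u t ∈ Metric.closedBall u₀ β)
    (hv : ContinuousOn v (Set.Icc a (a + δ)))
    (hvB : ∀ t ∈ Set.Icc a (a + δ), v t ∈ Metric.closedBall u₀ β)
    (Fu Fv : ℝ → E)
    (hFu : ∀ t, Fu t = u₀ + (Real.Gamma α)⁻¹ • ∫ s in a..t, ((t - s) ^ (α - 1) : ℝ) • f s (u s))
    (hFv : ∀ t, Fv t = u₀ + (Real.Gamma α)⁻¹ • ∫ s in a..t, ((t - s) ^ (α - 1) : ℝ) • f s (v s)) :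
    sSup ((fun t => ‖Fu t - Fv t‖) '' Set.Icc a (a + δ))
      ≤ κ * δ ^ α / Real.Gamma (α + 1) *
        sSup ((fun t => ‖u t - v t‖) '' Set.Icc a (a + δ)) :=
  volterra_operator_contraction_estimate_general a α δ β κ hδ hα0 hκ u₀ f hfc hlip u v hu huB hv hvB
    Fu Fv hFu hFv
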